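/- arXiv:1309.2890 — 6 statements merged into one kernel-verified Lean document; each statement's English description precedes it below -/
import Mathlib

section
/- Let G be a locally compact group, H < G a closed subgroup, and suppose H is the limit in the Chabauty topology of a net {H_i} of closed subgroups of G, each of which is relatively amenable in G. Then H is relatively amenable in G. -/
open scoped Topology

/-- A continuous affine action of a topological group `G` on a topological `ℝ`-vector space. -/
structure AffineActionOn (G : Type*) [Group G] [TopologicalSpace G]
    (E : Type) [AddCommGroup E] [Module ℝ E] [TopologicalSpace E] where
  act : G → E → E
  one_act : ∀ x, act 1 x = x
  mul_act : ∀ g h x, act (g * h) x = act g (act h x)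
  continuous : Continuous fun p : G × E => act p.1 p.2
  affine : ∀ g (x y : E) (t : ℝ), 0 ≤ t → t ≤ 1 →
    act g (t • x + (1 - t) • y) = t • act g x + (1 - t) • act g y

/-- A nonempty convex compact `G`-space: a nonempty convex compact subset of a Hausdorff
locally convex topological `ℝ`-vector space with a continuous affine `G`-action preserving it. -/
structure ConvexCompactSpaceOf (G : Type*) [Group G] [TopologicalSpace G] where
  E : Type
  [addCommGroup : AddCommGroup E]
  [module : Module ℝ E]
  [topology : TopologicalSpace E]
  [addGroupTop : IsTopologicalAddGroup E]
  [smulCont : ContinuousSMul ℝ E]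
  [locConvex : LocallyConvexSpace ℝ E]
  [t2 : T2Space E]
  ρ : AffineActionOn G E
  K : Set E
  compact : IsCompact K
  convex : Convex ℝ K
  nonempty : K.Nonempty
  invariant : ∀ g, ∀ x ∈ K, ρ.act g x ∈ K

attribute [instance] ConvexCompactSpaceOf.addCommGroup ConvexCompactSpaceOf.module
  ConvexCompactSpaceOf.topology ConvexCompactSpaceOf.addGroupTop ConvexCompactSpaceOf.smulCont
  ConvexCompactSpaceOf.locConvex ConvexCompactSpaceOf.t2

/-- `H < G` is relatively amenable: `H` fixes a point in every nonempty convex compact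
`G`-space. -/
def RelativelyAmenable (G : Type*) [Group G] [TopologicalSpace G] (H : Subgroup G) : Prop :=
  ∀ S : ConvexCompactSpaceOf G, ∃ x ∈ S.K, ∀ h ∈ H, S.ρ.act h x = x

/-- A topological group `L` is amenable: it fixes a point in every nonempty convex compact
`L`-space. -/
def TopAmenable (L : Type*) [Group L] [TopologicalSpace L] : Prop :=
  ∀ S : ConvexCompactSpaceOf L, ∃ x ∈ S.K, ∀ g : L, S.ρ.act g x = x

/-- `G` belongs to the class `𝒳`: every relatively amenable closed subgroup is amenable. -/
def MemClassX (G : Type*) [Group G] [TopologicalSpace G] : Prop :=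
  ∀ H : Subgroup G, IsClosed (H : Set G) → RelativelyAmenable G H → TopAmenable H

/-! For each `i` choose a point `x i ∈ K` fixed by `Hi i`, and let `y` be a cluster point of the
net `x` in the compact set `K`. Each `h ∈ H` is a limit of some `u i ∈ Hi i`; along a subnet with
`x i → y`, joint continuity of the action turns `u i • x i = x i` into `h • y = y`. -/

open Filter in
theorem MapClusterPt.act_eq_self_of_tendsto {G X ι : Type*} [TopologicalSpace G]
    [TopologicalSpace X] [T2Space X] {act : G → X → X}
    (hact : Continuous fun p : G × X => act p.1 p.2) {l : Filter ι} {u : ι → G} {x : ι → X}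
    {g : G} {y : X} (hy : MapClusterPt y l x) (hu : Tendsto u l (𝓝 g))
    (hfix : ∀ᶠ i in l, act (u i) (x i) = x i) : act g y = y := by
  obtain ⟨U, hUl, hUy⟩ := mapClusterPt_iff_ultrafilter.mp hy
  have hlim : Tendsto (fun i => act (u i) (x i)) U (𝓝 (act g y)) :=
    (hact.tendsto (g, y)).comp ((hu.mono_left hUl).prodMk_nhds hUy)
  exact tendsto_nhds_unique (hlim.congr' (hUl hfix)) hUy

theorem relativelyAmenable_of_chabauty_limit_general
    {G : Type} [Group G] [TopologicalSpace G]
    (H : Subgroup G)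
    {ι : Type} (l : Filter ι) [l.NeBot] (Hi : ι → Subgroup G)
    (hra : ∀ i, RelativelyAmenable G (Hi i))
    (happrox : ∀ x ∈ H, ∃ u : ι → G, (∀ i, u i ∈ Hi i) ∧ Filter.Tendsto u l (nhds x)) :
    RelativelyAmenable G H := by
  intro S
  choose x hxK hxfix using fun i => hra i S
  obtain ⟨y, hyK, hy⟩ :=
    S.compact.exists_mapClusterPt (f := l) (Filter.tendsto_principal.mpr (.of_forall hxK))
  refine ⟨y, hyK, fun h hh => ?_⟩
  obtain ⟨u, hu, hul⟩ := happrox h hh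
  exact hy.act_eq_self_of_tendsto S.ρ.continuous hul
    (Filter.Eventually.of_forall fun i => hxfix i (u i) (hu i))

/-- If a closed subgroup `H` of a locally compact group `G` is the Chabauty limit of a net
`{H i}` of closed subgroups each relatively amenable in `G`, then `H` is relatively amenable
in `G`.  Chabauty convergence is expressed by the two conditions `happrox` (every point of `H`
is a limit of points of the `H i`) and `hcluster` (every cluster point of a net of points of
the `H i` lies in `H`). -/
theorem relativelyAmenable_of_chabauty_limit
    {G : Type} [Group G] [TopologicalSpace G] [IsTopologicalGroup G] [LocallyCompactSpace G]
    (H : Subgroup G) (hHclosed : IsClosed (H : Set G))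
    {ι : Type} (l : Filter ι) [l.NeBot] (Hi : ι → Subgroup G)
    (hclosed : ∀ i, IsClosed (Hi i : Set G))
    (hra : ∀ i, RelativelyAmenable G (Hi i))
    (happrox : ∀ x ∈ H, ∃ u : ι → G, (∀ i, u i ∈ Hi i) ∧ Filter.Tendsto u l (nhds x))
    (hcluster : ∀ u : ι → G, (∀ i, u i ∈ Hi i) → ∀ x : G, MapClusterPt x l u → x ∈ H) :
    RelativelyAmenable G H :=
  relativelyAmenable_of_chabauty_limit_general H l Hi hra happrox
end

section
/- Let G be a discrete group and H < G a subgroup. If H is relatively amenable in G, then H is amenable. Equivalently, every discrete group belongs to the class X of groups in which relative amenability is equivalent to amenability for all closed subgroups. -/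
open scoped Topology

/-! Coinduction: an `H`-space `K` gives the `G`-space of `H`-equivariant maps `G → K`, on which
`G` acts by right translation (jointly continuous because `G` is discrete). It is nonempty
because a choice of right coset representatives yields an `H`-equivariant map `G → H`, and
compact by Tychonoff. A map fixed by `H` under right
translation satisfies `f 1 = f h = h • f 1`, so its value at `1` is an `H`-fixed point of `K`. -/

theorem AffineActionOn.continuous_act {G : Type*} [Group G] [TopologicalSpace G]
    {E : Type} [AddCommGroup E] [Module ℝ E] [TopologicalSpace E]
    (ρ : AffineActionOn G E) (g : G) : Continuous (ρ.act g) :=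
  ρ.continuous.comp (Continuous.prodMk_right g)

theorem Subgroup.exists_equivariant_map_to_subgroup {G : Type*} [Group G] (H : Subgroup G) :
    ∃ φ : G → H, ∀ (h : H) (x : G), φ (h * x) = h * φ x := by
  let r : G → G := fun x => (Quotient.mk (QuotientGroup.rightRel H) x).out
  have hr : ∀ x, x * (r x)⁻¹ ∈ H := fun x =>
    QuotientGroup.rightRel_apply.mp (Quotient.mk_out (s := QuotientGroup.rightRel H) x)
  have hr_mul : ∀ (h : H) x, r (h * x) = r x := fun h x => by
    refine congrArg Quotient.out (Quotient.sound (QuotientGroup.rightRel_apply.mpr ?_))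
    simp
  refine ⟨fun x => ⟨x * (r x)⁻¹, hr x⟩, fun h x => Subtype.ext ?_⟩
  simp only [hr_mul, Subgroup.coe_mul, mul_assoc]

section Coinduction

variable {G : Type*} [Group G] [TopologicalSpace G] {H : Subgroup G}
  {E : Type} [AddCommGroup E] [Module ℝ E] [TopologicalSpace E]

def equivariantMaps (ρ : AffineActionOn H E) (K : Set E) : Set (G → E) :=
  {f | (∀ x, f x ∈ K) ∧ ∀ (h : H) (x : G), f (h * x) = ρ.act h (f x)}

variable {ρ : AffineActionOn H E} {K : Set E}

theorem isClosed_equivariantMaps [T2Space E] (hK : IsClosed K) :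
    IsClosed (equivariantMaps (G := G) ρ K) := by
  have hmem : IsClosed {f : G → E | ∀ x, f x ∈ K} := by
    simp only [Set.ofPred_forall]
    exact isClosed_iInter fun x => hK.preimage (continuous_apply x)
  have hequiv : IsClosed {f : G → E | ∀ (h : H) (x : G), f (h * x) = ρ.act h (f x)} := by
    simp only [Set.ofPred_forall]
    exact isClosed_iInter fun h => isClosed_iInter fun x =>
      isClosed_eq (continuous_apply _) ((ρ.continuous_act h).comp (continuous_apply x))
  exact hmem.inter hequiv

theorem isCompact_equivariantMaps [T2Space E] (hK : IsCompact K) :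
    IsCompact (equivariantMaps (G := G) ρ K) :=
  (isCompact_univ_pi fun _ : G => hK).of_isClosed_subset
    (isClosed_equivariantMaps hK.isClosed) fun _ hf => Set.mem_univ_pi.mpr hf.1

theorem convex_equivariantMaps (hK : Convex ℝ K) :
    Convex ℝ (equivariantMaps (G := G) ρ K) := by
  intro f hf f' hf' a b ha hb hab
  obtain rfl : b = 1 - a := by linarith
  refine ⟨fun x => hK (hf.1 x) (hf'.1 x) ha hb hab, fun h x => ?_⟩
  simp only [Pi.add_apply, Pi.smul_apply, hf.2 h x, hf'.2 h x,
    ρ.affine h (f x) (f' x) a ha (by linarith)]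

theorem equivariantMaps_nonempty (hK : K.Nonempty) (hinv : ∀ h, ∀ x ∈ K, ρ.act h x ∈ K) :
    (equivariantMaps (G := G) ρ K).Nonempty := by
  obtain ⟨x₀, hx₀⟩ := hK
  obtain ⟨φ, hφ⟩ := H.exists_equivariant_map_to_subgroup
  exact ⟨fun x => ρ.act (φ x) x₀, fun x => hinv _ _ hx₀, fun h x => by
    simp only [hφ, ρ.mul_act]⟩

end Coinduction

section RightTranslation

variable (G : Type) [Group G] [TopologicalSpace G] [DiscreteTopology G]
  (E : Type) [AddCommGroup E] [Module ℝ E] [TopologicalSpace E]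

def AffineActionOn.rightTranslation : AffineActionOn G (G → E) where
  act g f x := f (x * g)
  one_act f := by simp only [mul_one]
  mul_act g h f := by simp only [mul_assoc]
  continuous := continuous_prod_of_discrete_left.mpr fun g =>
    continuous_pi fun x => continuous_apply (x * g)
  affine _ _ _ _ _ _ := rfl

variable {G E} {H : Subgroup G} {ρ : AffineActionOn H E} {K : Set E}

theorem rightTranslation_mem_equivariantMaps {f : G → E}
    (hf : f ∈ equivariantMaps ρ K) (g : G) :
    (AffineActionOn.rightTranslation G E).act g f ∈ equivariantMaps ρ K :=
  ⟨fun x => hf.1 (x * g), fun h x => by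
    simpa only [AffineActionOn.rightTranslation, mul_assoc] using hf.2 h (x * g)⟩

def ConvexCompactSpaceOf.coinduced (S : ConvexCompactSpaceOf H) :
    ConvexCompactSpaceOf G where
  E := G → S.E
  ρ := AffineActionOn.rightTranslation G S.E
  K := equivariantMaps S.ρ S.K
  compact := isCompact_equivariantMaps S.compact
  convex := convex_equivariantMaps S.convex
  nonempty := equivariantMaps_nonempty S.nonempty S.invariant
  invariant g _ hf := rightTranslation_mem_equivariantMaps hf g

end RightTranslation

/-- Every discrete group belongs to the class `𝒳`: if a subgroup `H` of a discrete group `G`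
is relatively amenable in `G`, then `H` is amenable. -/
theorem discrete_memClassX
    {G : Type} [Group G] [TopologicalSpace G] [DiscreteTopology G]
    (H : Subgroup G) (hra : RelativelyAmenable G H) : TopAmenable H := by
  intro S
  obtain ⟨f, hf, hfix⟩ : ∃ f ∈ equivariantMaps S.ρ S.K, ∀ h ∈ H, (fun x => f (x * h)) = f :=
    hra S.coinduced
  refine ⟨f 1, hf.1 1, fun h => ?_⟩
  have hright : f h = f 1 := by simpa using congrFun (hfix h h.2) 1
  have hleft : f h = S.ρ.act h (f 1) := by simpa using hf.2 h 1
  rw [← hleft, hright]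
end

section
/- Let G be a locally compact group in the class X and H < G a closed subgroup. Then H belongs to X. That is, the class X is closed under taking closed subgroups. -/
open scoped Topology

namespace ConvexCompactSpaceOf

variable {G L : Type*} [Group G] [TopologicalSpace G] [Group L] [TopologicalSpace L]

def comap (S : ConvexCompactSpaceOf G) (f : L →* G) (hf : Continuous f) :
    ConvexCompactSpaceOf L where
  E := S.E
  ρ :=
    { act := fun l x => S.ρ.act (f l) x
      one_act := fun x => by simp only [map_one, S.ρ.one_act]
      mul_act := fun g h x => by simp only [map_mul, S.ρ.mul_act]
      continuous := S.ρ.continuous.comp (hf.prodMap continuous_id)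
      affine := fun g => S.ρ.affine (f g) }
  K := S.K
  compact := S.compact
  convex := S.convex
  nonempty := S.nonempty
  invariant := fun g => S.invariant (f g)

end ConvexCompactSpaceOf

section Transfer

variable {G L : Type*} [Group G] [TopologicalSpace G] [Group L] [TopologicalSpace L]

theorem RelativelyAmenable.map {K : Subgroup L} (hK : RelativelyAmenable L K) (f : L →* G)
    (hf : Continuous f) : RelativelyAmenable G (K.map f) := by
  intro S
  obtain ⟨x, hx, hfix⟩ := hK (S.comap f hf)
  exact ⟨x, hx, by rintro _ ⟨k, hk, rfl⟩; exact hfix k hk⟩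

theorem TopAmenable.of_surjective (hL : TopAmenable L) (f : L →* G) (hf : Continuous f)
    (hsurj : Function.Surjective f) : TopAmenable G := by
  intro S
  obtain ⟨x, hx, hfix⟩ := hL (S.comap f hf)
  refine ⟨x, hx, fun g => ?_⟩
  obtain ⟨l, rfl⟩ := hsurj g
  exact hfix l

theorem Subgroup.continuous_equivMapOfInjective_symm (K : Subgroup L) {f : L →* G}
    (hf : Topology.IsEmbedding f) :
    Continuous (K.equivMapOfInjective f hf.injective).symm := by
  refine continuous_induced_rng.2 (hf.continuous_iff.2 ?_)
  convert continuous_subtype_val using 1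
  funext g
  conv_rhs => rw [← (K.equivMapOfInjective f hf.injective).apply_symm_apply g]
  rfl

theorem Subgroup.isClosed_map_subtype {H : Subgroup G} (hH : IsClosed (H : Set G))
    {K : Subgroup H} (hK : IsClosed (K : Set H)) : IsClosed (K.map H.subtype : Set G) :=
  hH.isClosedEmbedding_subtypeVal.isClosedMap _ hK

end Transfer

theorem memClassX_closed_subgroup_general
    {G : Type} [Group G] [TopologicalSpace G]
    (hG : MemClassX G) (H : Subgroup G) (hH : IsClosed (H : Set G)) : MemClassX H := by
  intro K hK hKrel
  have hamen : TopAmenable (K.map H.subtype) :=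
    hG _ (Subgroup.isClosed_map_subtype hH hK) (hKrel.map H.subtype continuous_subtype_val)
  let e := K.equivMapOfInjective H.subtype H.subtype_injective
  exact hamen.of_surjective e.symm.toMonoidHom
    (K.continuous_equivMapOfInjective_symm Topology.IsEmbedding.subtypeVal) e.symm.surjective

/-- The class `𝒳` is closed under taking closed subgroups. -/
theorem memClassX_closed_subgroup
    {G : Type} [Group G] [TopologicalSpace G] [IsTopologicalGroup G] [LocallyCompactSpace G]
    (hG : MemClassX G) (H : Subgroup G) (hH : IsClosed (H : Set G)) : MemClassX H :=
  memClassX_closed_subgroup_general hG H hH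
end

section
/- Let G be a topological group and H, L < G subgroups such that L ⪰_G H, i.e. every convex compact G-space with an L-fixed point has an H-fixed point. Suppose H is the Chabauty limit of a net {H_i} of closed subgroups with L ⪰_G H_i for all i. Then L ⪰_G H. That is, the relation ⪰_G is closed in the second variable for the Chabauty topology. -/
open scoped Topology

/-- `L` is co-amenable to `H` relative to `G` (written `L ⪰_G H`): every convex compact
`G`-space with an `L`-fixed point has an `H`-fixed point. -/
def RelCoamenable (G : Type*) [Group G] [TopologicalSpace G] (L H : Subgroup G) : Prop :=
  ∀ S : ConvexCompactSpaceOf G,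
    (∃ x ∈ S.K, ∀ l ∈ L, S.ρ.act l x = x) → ∃ x ∈ S.K, ∀ h ∈ H, S.ρ.act h x = x

/-! Choose `Hi i`-fixed points `f i ∈ K`; by compactness they cluster at some `x ∈ K`. Every
`h ∈ H` is a limit of `u i ∈ Hi i`, and along an ultrafilter on which `f i → x` the identity
`u i • f i = f i` passes to the limit `h • x = x`. -/

open Filter

theorem forall_mem_act_eq_of_mapClusterPt {G E ι : Type*} [TopologicalSpace G]
    [TopologicalSpace E] [T2Space E] {act : G → E → E}
    (hact : Continuous fun p : G × E => act p.1 p.2) {l : Filter ι} {H : Set G}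
    {Hi : ι → Set G} (happrox : ∀ g ∈ H, ∃ u : ι → G, (∀ i, u i ∈ Hi i) ∧ Tendsto u l (𝓝 g))
    {f : ι → E} (hfix : ∀ i, ∀ h ∈ Hi i, act h (f i) = f i) {x : E} (hx : MapClusterPt x l f) :
    ∀ g ∈ H, act g x = x := by
  intro g hg
  obtain ⟨u, hu, hul⟩ := happrox g hg
  obtain ⟨U, hUl, hfU⟩ := mapClusterPt_iff_ultrafilter.mp hx
  have hact_lim : Tendsto (fun i => act (u i) (f i)) U (𝓝 (act g x)) :=
    (hact.tendsto (g, x)).comp ((hul.mono_left hUl).prodMk_nhds hfU)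
  exact tendsto_nhds_unique (hact_lim.congr fun i => hfix i (u i) (hu i)) hfU

theorem relCoamenable_of_chabauty_limit_general
    {G : Type} [Group G] [TopologicalSpace G]
    (L H : Subgroup G)
    {ι : Type} (l : Filter ι) [l.NeBot] (Hi : ι → Subgroup G)
    (hco : ∀ i, RelCoamenable G L (Hi i))
    (happrox : ∀ x ∈ H, ∃ u : ι → G, (∀ i, u i ∈ Hi i) ∧ Filter.Tendsto u l (nhds x)) :
    RelCoamenable G L H := by
  intro S hL
  choose f hfK hfix using fun i => hco i S hL
  obtain ⟨x, hxK, hx⟩ := S.compact.exists_mapClusterPt (f := l)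
    (le_principal_iff.2 <| mem_map.2 <| univ_mem' hfK)
  exact ⟨x, hxK, forall_mem_act_eq_of_mapClusterPt S.ρ.continuous happrox hfix hx⟩

/-- The relation `⪰_G` is closed in the second variable for the Chabauty topology: if `H` is
the Chabauty limit of a net of closed subgroups `H i` with `L ⪰_G H i` for all `i`, then
`L ⪰_G H`. -/
theorem relCoamenable_of_chabauty_limit
    {G : Type} [Group G] [TopologicalSpace G]
    (L H : Subgroup G)
    {ι : Type} (l : Filter ι) [l.NeBot] (Hi : ι → Subgroup G)
    (hclosed : ∀ i, IsClosed (Hi i : Set G))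
    (hco : ∀ i, RelCoamenable G L (Hi i))
    (happrox : ∀ x ∈ H, ∃ u : ι → G, (∀ i, u i ∈ Hi i) ∧ Filter.Tendsto u l (nhds x))
    (hcluster : ∀ u : ι → G, (∀ i, u i ∈ Hi i) → ∀ x : G, MapClusterPt x l u → x ∈ H) :
    RelCoamenable G L H :=
  relCoamenable_of_chabauty_limit_general L H l Hi hco happrox
end

section
/- Let G be a locally compact group acting continuously on a locally compact Hausdorff space X. Suppose there is an open subgroup O < G and a compact set K ⊆ X such that O preserves K and every element of O acts as the identity on X \ K. Then the G-action on the Stone–Čech compactification βX is continuous, and consequently the G-representation on C_b(X) by left translation is continuous for the sup-norm. -/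
open scoped Topology

/-- The extension to the Stone–Čech compactification of the action map `act g : X → X`. -/
noncomputable def betaAct {G X : Type} [TopologicalSpace X]
    (act : G → X → X) (hc : ∀ g : G, Continuous (act g)) (g : G) :
    StoneCech X → StoneCech X :=
  stoneCechExtend (continuous_stoneCechUnit.comp (hc g))

/-!
`βX` is the union of the compact set `K` and the closure `D` of `X \ K`. Every `o ∈ O` fixes `D`
pointwise, so on `O × D` the action is the projection to `D`, while on `G × K` it is the original
action followed by `X → βX`; as `G × K → G × βX` is a closed map, this gives continuity on the
image of `G × K`. Both pieces are closed, so the action is continuous on the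
neighbourhood `O × βX` of `{1} × βX`, hence everywhere by translation. For `C_b(X)`, the same
splitting (tube lemma on `K`, triviality off `K`) makes `f ∘ act g` converge uniformly to `f` as
`g → 1`; since translations are isometries this gives joint continuity.
-/

open Filter Set BoundedContinuousFunction

theorem IsClosedMap.continuousOn_range_of_continuous_comp {α β γ : Type*} [TopologicalSpace α]
    [TopologicalSpace β] [TopologicalSpace γ] {f : α → β} {F : β → γ} (hf : IsClosedMap f)
    (hfc : Continuous f) (hF : Continuous (F ∘ f)) : ContinuousOn F (range f) := by
  rw [continuousOn_iff_continuous_domRestrict]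
  exact ((hf.codRestrict mem_range_self).isQuotientMap hfc.rangeFactorization
    rangeFactorization_surjective).continuous_iff.mpr hF

theorem continuous_uncurry_of_continuousAt_one {G Z : Type*} [Group G] [TopologicalSpace G]
    [SeparatelyContinuousMul G] [TopologicalSpace Z] {a : G → Z → Z}
    (hmul : ∀ g h z, a (g * h) z = a g (a h z)) (hc : ∀ g, Continuous (a g))
    (h1 : ∀ z, ContinuousAt (fun p : G × Z => a p.1 p.2) (1, z)) :
    Continuous fun p : G × Z => a p.1 p.2 := by
  refine continuous_iff_continuousAt.mpr fun ⟨g₀, z₀⟩ => ?_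
  have htranslate : (fun p : G × Z => a p.1 p.2) =
      a g₀ ∘ (fun p : G × Z => a p.1 p.2) ∘ fun p => (g₀⁻¹ * p.1, p.2) := by
    ext p
    simp [← hmul]
  rw [htranslate]
  refine (hc g₀).continuousAt.comp (ContinuousAt.comp ?_
    (((continuous_const_mul g₀⁻¹).comp continuous_fst).prodMk continuous_snd).continuousAt)
  simpa using h1 z₀

section BetaAct

variable {G X : Type} [TopologicalSpace X] (act : G → X → X) (hc : ∀ g : G, Continuous (act g))

theorem betaAct_stoneCechUnit (g : G) (x : X) :
    betaAct act hc g (stoneCechUnit x) = stoneCechUnit (act g x) :=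
  congrFun (stoneCechExtend_extends _) x

theorem continuous_betaAct (g : G) : Continuous (betaAct act hc g) :=
  continuous_stoneCechExtend _

theorem betaAct_mul [Mul G] (hmul : ∀ g h x, act (g * h) x = act g (act h x)) (g h : G)
    (z : StoneCech X) : betaAct act hc (g * h) z = betaAct act hc g (betaAct act hc h z) := by
  refine congrFun (stoneCech_hom_ext (continuous_betaAct act hc _)
    ((continuous_betaAct act hc g).comp (continuous_betaAct act hc h)) ?_) z
  ext x
  simp [betaAct_stoneCechUnit, hmul]

theorem betaAct_eq_self_of_mem_closure {g : G} {s : Set X} (hs : ∀ x ∈ s, act g x = x)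
    {z : StoneCech X} (hz : z ∈ closure (stoneCechUnit '' s)) : betaAct act hc g z = z := by
  refine EqOn.closure ?_ (continuous_betaAct act hc g) continuous_id hz
  rintro _ ⟨x, hx, rfl⟩
  simp [betaAct_stoneCechUnit, hs x hx]

theorem continuousOn_betaAct_univ_prod_image [TopologicalSpace G]
    (hjoint : Continuous fun p : G × X => act p.1 p.2) {K : Set X} (hK : IsCompact K) :
    ContinuousOn (fun p : G × StoneCech X => betaAct act hc p.1 p.2)
      (univ ×ˢ (stoneCechUnit '' K)) := by
  have : CompactSpace K := isCompact_iff_compactSpace.mp hK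
  let ι : G × K → G × StoneCech X := Prod.map id (stoneCechUnit ∘ (↑))
  have hι : IsProperMap ι := isProperMap_id.prodMap
    (continuous_stoneCechUnit.comp continuous_subtype_val).isProperMap
  have hrange : range ι = univ ×ˢ (stoneCechUnit '' K) := by
    rw [range_prodMap, range_id, range_comp, Subtype.range_coe]
  rw [← hrange]
  refine hι.isClosedMap.continuousOn_range_of_continuous_comp hι.continuous ?_
  have hcomp : (fun p : G × StoneCech X => betaAct act hc p.1 p.2) ∘ ι =
      fun p => stoneCechUnit (act p.1 p.2.1) := by
    ext p
    exact betaAct_stoneCechUnit act hc p.1 p.2.1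
  rw [hcomp]
  exact continuous_stoneCechUnit.comp
    (hjoint.comp (continuous_fst.prodMk (continuous_subtype_val.comp continuous_snd)))

theorem continuousAt_betaAct_one [Group G] [TopologicalSpace G] [SeparatelyContinuousMul G]
    (hjoint : Continuous fun p : G × X => act p.1 p.2) {O : Subgroup G}
    (hO : IsOpen (O : Set G)) {K : Set X} (hK : IsCompact K) (htriv : ∀ o ∈ O, ∀ x ∉ K, act o x = x)
    (z : StoneCech X) :
    ContinuousAt (fun p : G × StoneCech X => betaAct act hc p.1 p.2) (1, z) := by
  have hCD : stoneCechUnit '' K ∪ closure (stoneCechUnit '' Kᶜ) = univ := by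
    rw [← (hK.image continuous_stoneCechUnit).isClosed.closure_eq, ← closure_union, ← image_union,
      union_compl_self, image_univ, denseRange_stoneCechUnit.closure_range]
  have hD : ContinuousOn (fun p : G × StoneCech X => betaAct act hc p.1 p.2)
      (O ×ˢ closure (stoneCechUnit '' Kᶜ)) :=
    continuous_snd.continuousOn.congr fun p hp =>
      betaAct_eq_self_of_mem_closure act hc (htriv p.1 hp.1) hp.2
  have hcont := (continuousOn_betaAct_univ_prod_image act hc hjoint hK).union_of_isClosed hD
    (isClosed_univ.prod (hK.image continuous_stoneCechUnit).isClosed)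
    ((O.isClosed_of_isOpen hO).prod isClosed_closure)
  refine hcont.continuousAt
    (mem_of_superset ((hO.prod isOpen_univ).mem_nhds ⟨O.one_mem, trivial⟩) ?_)
  rintro ⟨o, z⟩ ⟨ho, -⟩
  obtain hz | hz := hCD ▸ mem_univ z
  exacts [Or.inl ⟨trivial, hz⟩, Or.inr ⟨ho, hz⟩]

end BetaAct

section Translation

variable {G X β : Type*} [TopologicalSpace X] [PseudoMetricSpace β]
  (act : G → X → X) (hc : ∀ g : G, Continuous (act g))

theorem continuousAt_compContinuous_act_one [Monoid G] [TopologicalSpace G]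
    (hone : ∀ x, act 1 x = x) (hjoint : Continuous fun p : G × X => act p.1 p.2) {K : Set X}
    (hK : IsCompact K) (htriv : ∀ᶠ g in 𝓝 1, ∀ x ∉ K, act g x = x) (f : X →ᵇ β) :
    ContinuousAt (fun g => f.compContinuous ⟨act g, hc g⟩) 1 := by
  have hf : f.compContinuous ⟨act 1, hc 1⟩ = f := by
    ext x
    simp [hone]
  rw [ContinuousAt, hf, tendsto_iff_tendstoUniformly, Metric.tendstoUniformly_iff]
  intro ε hε
  have hnear : ∀ᶠ g in 𝓝 1, ∀ x ∈ K, dist (f x) (f (act g x)) < ε :=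
    hK.eventually_forall_of_forall_eventually fun x _ =>
      ContinuousAt.eventually_lt (by fun_prop) continuousAt_const (by simpa [hone] using hε)
  filter_upwards [hnear, htriv] with g hg hfix x
  by_cases hx : x ∈ K
  · exact hg x hx
  · simpa [hfix x hx] using hε

theorem continuous_compContinuous_act_inv [Group G] [TopologicalSpace G] [ContinuousInv G]
    [SeparatelyContinuousMul G]
    (hmul : ∀ g h x, act (g * h) x = act g (act h x)) {f : X →ᵇ β}
    (hf : ContinuousAt (fun g => f.compContinuous ⟨act g, hc g⟩) 1) :
    Continuous fun g => f.compContinuous ⟨act g⁻¹, hc g⁻¹⟩ := by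
  refine continuous_iff_continuousAt.mpr fun g₀ => ?_
  have htranslate : (fun g : G => f.compContinuous ⟨act g⁻¹, hc g⁻¹⟩) = fun g =>
      (f.compContinuous ⟨act (g⁻¹ * g₀), hc _⟩).compContinuous ⟨act g₀⁻¹, hc g₀⁻¹⟩ := by
    ext g x
    simp [← hmul]
  rw [htranslate]
  exact (continuous_compContinuous _).continuousAt.comp
    (hf.comp_of_eq ((continuous_mul_const g₀).comp continuous_inv).continuousAt
      (inv_mul_cancel g₀))

end Translation

theorem continuous_betaAct_and_rep_of_open_subgroup_general
    {G X : Type} [Group G] [TopologicalSpace G] [IsTopologicalGroup G]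
    [TopologicalSpace X]
    (act : G → X → X)
    (hone : ∀ x, act 1 x = x)
    (hmul : ∀ g h x, act (g * h) x = act g (act h x))
    (hjoint : Continuous fun p : G × X => act p.1 p.2)
    (hc : ∀ g : G, Continuous (act g))
    (O : Subgroup G) (hOopen : IsOpen (O : Set G))
    (K : Set X) (hK : IsCompact K)
    (htriv : ∀ o ∈ O, ∀ x ∉ K, act o x = x) :
    (Continuous fun p : G × StoneCech X => betaAct act hc p.1 p.2) ∧
    (Continuous fun p : G × BoundedContinuousFunction X ℝ =>
      p.2.compContinuous ⟨act p.1⁻¹, hc p.1⁻¹⟩) := by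
  refine ⟨continuous_uncurry_of_continuousAt_one (betaAct_mul act hc hmul)
    (continuous_betaAct act hc) (continuousAt_betaAct_one act hc hjoint hOopen hK htriv), ?_⟩
  have htriv_near_one : ∀ᶠ g in 𝓝 (1 : G), ∀ x ∉ K, act g x = x :=
    eventually_of_mem (hOopen.mem_nhds O.one_mem) htriv
  exact continuous_prod_of_continuous_lipschitzWith'
    (fun p : G × (X →ᵇ ℝ) => p.2.compContinuous ⟨act p.1⁻¹, hc p.1⁻¹⟩) 1
    (fun g => lipschitz_compContinuous ⟨act g⁻¹, hc g⁻¹⟩)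
    fun f => continuous_compContinuous_act_inv act hc hmul
      (continuousAt_compContinuous_act_one act hc hone hjoint hK htriv_near_one f)

/-- Suppose a locally compact group `G` acts continuously on a locally compact Hausdorff
space `X`, and there are an open subgroup `O < G` and a compact set `K ⊆ X` such that `O`
preserves `K` and every element of `O` acts as the identity on `X \ K`.  Then the `G`-action
on the Stone–Čech compactification `βX` is continuous and, consequently, the `G`-representation
on `C_b(X)` by left translation is continuous for the sup-norm. -/
theorem continuous_betaAct_and_rep_of_open_subgroup
    {G X : Type} [Group G] [TopologicalSpace G] [IsTopologicalGroup G] [LocallyCompactSpace G]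
    [TopologicalSpace X] [LocallyCompactSpace X] [T2Space X]
    (act : G → X → X)
    (hone : ∀ x, act 1 x = x)
    (hmul : ∀ g h x, act (g * h) x = act g (act h x))
    (hjoint : Continuous fun p : G × X => act p.1 p.2)
    (hc : ∀ g : G, Continuous (act g))
    (O : Subgroup G) (hOopen : IsOpen (O : Set G))
    (K : Set X) (hK : IsCompact K)
    (hpres : ∀ o ∈ O, ∀ x ∈ K, act o x ∈ K)
    (htriv : ∀ o ∈ O, ∀ x ∉ K, act o x = x) :
    (Continuous fun p : G × StoneCech X => betaAct act hc p.1 p.2) ∧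
    (Continuous fun p : G × BoundedContinuousFunction X ℝ =>
      p.2.compContinuous ⟨act p.1⁻¹, hc p.1⁻¹⟩) :=
  continuous_betaAct_and_rep_of_open_subgroup_general act hone hmul hjoint hc O hOopen K hK htriv
end

section
/- Let G be a locally compact group with a countable basis of identity neighbourhoods, acting continuously on a σ-compact locally compact Hausdorff space X. If the G-representation on C_b(X) by left translation is continuous for the sup-norm, then there exists an open subgroup O < G and a compact set K ⊆ X such that O preserves K and acts trivially on X \ K. -/
/-!
Suppose no identity neighbourhood fixes the complement of a compact set pointwise. A countable
basis at `1` and a compact exhaustion of `X` then give `g n → 1` and points `x n` with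
`g n • x n ≠ x n`, such that both `x n` and `g n • x n` leave every compact set. After passing to a
subsequence the two sequences have disjoint closed ranges, and an Urysohn function `f` that is `0`
on the `x n` and `1` on the `g n • x n` satisfies `‖g n • f - f‖ ≥ 1`, contradicting continuity of
the representation at `1`. So some compact `K` has a fixing subgroup of `Kᶜ` that is a
neighbourhood of `1`; this subgroup is open and preserves `K`.
-/

open Set Filter Topology Pointwise MulAction BoundedContinuousFunction

lemma isClosed_range_of_tendsto_cocompact {X : Type*} [TopologicalSpace X] [T2Space X]
    [CompactlyCoherentSpace X] {x : ℕ → X} (hx : Tendsto x atTop (cocompact X)) :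
    IsClosed (range x) := by
  rw [← cocompact_eq_atTop] at hx
  exact (isProperMap_iff_tendsto_cocompact.2 ⟨continuous_of_discreteTopology, hx⟩).isClosed_range

lemma CompactExhaustion.tendsto_cocompact_of_notMem {X : Type*} [TopologicalSpace X]
    (E : CompactExhaustion X) {x : ℕ → X} (hx : ∀ n, x n ∉ E n) :
    Tendsto x atTop (cocompact X) := by
  refine hasBasis_cocompact.tendsto_right_iff.2 fun K hK => ?_
  obtain ⟨N, hKE⟩ := E.exists_superset_of_isCompact hK
  filter_upwards [eventually_ge_atTop N] with n hn hxK
  exact hx n (E.subset hn (hKE hxK))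

lemma exists_strictMono_disjoint_range {X : Type*} [TopologicalSpace X] {x y : ℕ → X}
    (hx : Tendsto x atTop (cocompact X)) (hy : Tendsto y atTop (cocompact X))
    (hxy : ∀ n, x n ≠ y n) :
    ∃ φ : ℕ → ℕ, StrictMono φ ∧ Disjoint (range (x ∘ φ)) (range (y ∘ φ)) := by
  obtain ⟨φ, -, hφ⟩ := exists_seq_of_forall_finset_exists (fun _ => True)
    (fun m n => m < n ∧ x n ∉ ({x m, y m} : Set X) ∧ y n ∉ ({x m, y m} : Set X))
    fun s _ => by
      let F : Set X := ⋃ m ∈ s, {x m, y m}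
      have hF : IsCompact F := (s.finite_toSet.biUnion fun m _ => toFinite _).isCompact
      obtain ⟨n, hn⟩ := ((eventually_gt_atTop (s.sup id)).and
        ((hx.eventually hF.compl_mem_cocompact).and (hy.eventually hF.compl_mem_cocompact))).exists
      refine ⟨n, trivial, fun m hm => ⟨(Finset.le_sup (f := id) hm).trans_lt hn.1, ?_, ?_⟩⟩
      · exact fun h => hn.2.1 (mem_biUnion hm h)
      · exact fun h => hn.2.2 (mem_biUnion hm h)
  refine ⟨φ, fun m n h => (hφ m n h).1, disjoint_left.2 ?_⟩
  rintro _ ⟨m, rfl⟩ ⟨n, hn⟩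
  rcases lt_trichotomy m n with h | rfl | h
  · exact (hφ m n h).2.2 (Or.inl hn)
  · exact hxy _ hn.symm
  · exact (hφ n m h).2.1 (Or.inr hn.symm)

lemma smul_mem_of_mem_fixingSubgroup_compl {G X : Type*} [Group G] [MulAction G X] {s : Set X}
    {g : G} (hg : g ∈ fixingSubgroup G sᶜ) {x : X} (hx : x ∈ s) : g • x ∈ s :=
  orbit_fixingSubgroup_compl_subset G X hx (mem_orbit x (⟨g, hg⟩ : fixingSubgroup G sᶜ))

section LeftTranslate

variable {G X : Type*} [Group G] [MulAction G X] [TopologicalSpace X] [ContinuousConstSMul G X]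

def leftTranslate {β : Type*} [PseudoMetricSpace β] (g : G) (f : X →ᵇ β) : X →ᵇ β :=
  f.compContinuous ⟨(g⁻¹ • ·), continuous_const_smul _⟩

@[simp]
lemma leftTranslate_apply {β : Type*} [PseudoMetricSpace β] (g : G) (f : X →ᵇ β) (x : X) :
    leftTranslate g f x = f (g⁻¹ • x) :=
  rfl

@[simp]
lemma leftTranslate_one {β : Type*} [PseudoMetricSpace β] (f : X →ᵇ β) :
    leftTranslate (1 : G) f = f := by
  ext x
  simp

lemma exists_one_le_dist_leftTranslate [NormalSpace X] {g : ℕ → G} {x : ℕ → X}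
    (hx : IsClosed (range x)) (hgx : IsClosed (range fun n => g n • x n))
    (hdisj : Disjoint (range x) (range fun n => g n • x n)) :
    ∃ f : X →ᵇ ℝ, ∀ n, 1 ≤ dist (leftTranslate (g n) f) f := by
  obtain ⟨f, hf0, hf1, -⟩ := exists_bounded_zero_one_of_closed hx hgx hdisj
  refine ⟨f, fun n => ?_⟩
  calc (1 : ℝ) = dist (leftTranslate (g n) f (g n • x n)) (f (g n • x n)) := by
        simp [hf0 (mem_range_self n), hf1 (mem_range_self (f := fun n => g n • x n) n)]
    _ ≤ _ := BoundedContinuousFunction.dist_coe_le_dist _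

end LeftTranslate

section Action

variable {G X : Type*} [Group G] [TopologicalSpace G] [ContinuousInv G] [LocallyCompactSpace G]
  [TopologicalSpace X] [MulAction G X] [ContinuousSMul G X]

/-- Enlarging `K` by `V⁻¹ • K` for a compact neighbourhood `V` of `1` keeps `g • x` outside `K`. -/
lemma frequently_exists_smul_ne_notMem
    (h : ∀ K : Set X, IsCompact K → ∃ᶠ g in 𝓝 (1 : G), g ∉ fixingSubgroup G Kᶜ)
    {K : Set X} (hK : IsCompact K) :
    ∃ᶠ g in 𝓝 (1 : G), ∃ x, x ∉ K ∧ g • x ∉ K ∧ g • x ≠ x := by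
  obtain ⟨V, hV, hV1⟩ := exists_compact_mem_nhds (1 : G)
  refine ((h _ (hK.union (hV.inv.smul_set hK))).and_eventually hV1).mono ?_
  rintro g ⟨hg, hgV⟩
  obtain ⟨x, hxK, hxV, hgx⟩ : ∃ x ∉ K, x ∉ V⁻¹ • K ∧ g • x ≠ x := by
    simpa [mem_fixingSubgroup_iff] using hg
  refine ⟨x, hxK, fun h => hxV ?_, hgx⟩
  simpa using smul_mem_smul (inv_mem_inv.2 hgV) h

lemma exists_seq_smul_ne_of_forall_frequently [FirstCountableTopology G]
    [WeaklyLocallyCompactSpace X] [SigmaCompactSpace X]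
    (h : ∀ K : Set X, IsCompact K → ∃ᶠ g in 𝓝 (1 : G), g ∉ fixingSubgroup G Kᶜ) :
    ∃ (g : ℕ → G) (x : ℕ → X), Tendsto g atTop (𝓝 1) ∧ Tendsto x atTop (cocompact X) ∧
      Tendsto (fun n => g n • x n) atTop (cocompact X) ∧ ∀ n, g n • x n ≠ x n := by
  obtain ⟨u, hu⟩ := (𝓝 (1 : G)).exists_antitone_basis
  let E := CompactExhaustion.choice X
  have hstep (n : ℕ) : ∃ g ∈ u n, ∃ x, x ∉ E n ∧ g • x ∉ E n ∧ g • x ≠ x :=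
    ((frequently_exists_smul_ne_notMem h (E.isCompact n)).and_eventually (hu.mem n)).exists.imp
      fun g hg => ⟨hg.2, hg.1⟩
  choose g hgu x hx hgx hne using hstep
  exact ⟨g, x, hu.tendsto hgu, E.tendsto_cocompact_of_notMem hx,
    E.tendsto_cocompact_of_notMem hgx, hne⟩

theorem exists_isCompact_fixingSubgroup_compl_mem_nhds
    [FirstCountableTopology G] [LocallyCompactSpace X] [T2Space X] [SigmaCompactSpace X]
    (h : ∀ f : X →ᵇ ℝ, Tendsto (fun g : G => leftTranslate g f) (𝓝 1) (𝓝 f)) :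
    ∃ K : Set X, IsCompact K ∧ (fixingSubgroup G Kᶜ : Set G) ∈ 𝓝 1 := by
  by_contra! hcon
  obtain ⟨g, x, hg, hx, hgx, hne⟩ :=
    exists_seq_smul_ne_of_forall_frequently fun K hK => not_eventually.1 (hcon K hK)
  obtain ⟨φ, hφ, hdisj⟩ := exists_strictMono_disjoint_range hx hgx fun n => (hne n).symm
  obtain ⟨f, hf⟩ := exists_one_le_dist_leftTranslate (g := g ∘ φ)
    (isClosed_range_of_tendsto_cocompact (hx.comp hφ.tendsto_atTop))
    (isClosed_range_of_tendsto_cocompact (hgx.comp hφ.tendsto_atTop)) hdisj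
  obtain ⟨n, hn⟩ :=
    (((h f).comp (hg.comp hφ.tendsto_atTop)).eventually (Metric.ball_mem_nhds f one_pos)).exists
  exact (hf n).not_gt hn

end Action

/-- Let `G` be a locally compact group with a countable basis of identity neighbourhoods,
acting continuously on a σ-compact locally compact Hausdorff space `X`.  If the
`G`-representation on `C_b(X)` by left translation is continuous for the sup-norm, then there
are an open subgroup `O < G` and a compact set `K ⊆ X` such that `O` preserves `K` and every
element of `O` acts as the identity on `X \ K`. -/
theorem exists_open_subgroup_of_continuous_rep
    {G X : Type} [Group G] [TopologicalSpace G] [IsTopologicalGroup G] [LocallyCompactSpace G]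
    [FirstCountableTopology G]
    [TopologicalSpace X] [LocallyCompactSpace X] [T2Space X] [SigmaCompactSpace X]
    (act : G → X → X)
    (hone : ∀ x, act 1 x = x)
    (hmul : ∀ g h x, act (g * h) x = act g (act h x))
    (hjoint : Continuous fun p : G × X => act p.1 p.2)
    (hc : ∀ g : G, Continuous (act g))
    (hrep : Continuous fun p : G × BoundedContinuousFunction X ℝ =>
      p.2.compContinuous ⟨act p.1⁻¹, hc p.1⁻¹⟩) :
    ∃ (O : Subgroup G) (K : Set X), IsOpen (O : Set G) ∧ IsCompact K ∧
      (∀ o ∈ O, ∀ x ∈ K, act o x ∈ K) ∧ ∀ o ∈ O, ∀ x ∉ K, act o x = x := by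
  let _ : MulAction G X := { smul := act, one_smul := hone, mul_smul := hmul }
  have : ContinuousSMul G X := ⟨hjoint⟩
  have horbit (f : X →ᵇ ℝ) : Continuous fun g : G => leftTranslate g f :=
    hrep.comp (Continuous.prodMk_left f)
  obtain ⟨K, hK, hfix⟩ := exists_isCompact_fixingSubgroup_compl_mem_nhds (G := G) (X := X)
    fun f => by simpa using (horbit f).tendsto 1
  exact ⟨fixingSubgroup G Kᶜ, K, Subgroup.isOpen_of_mem_nhds _ hfix, hK,
    fun o ho x hx => smul_mem_of_mem_fixingSubgroup_compl ho hx,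
    fun o ho x hx => ((mem_fixingSubgroup_iff G).1 ho) x hx⟩
end
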